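/- Every LK-simple single term formula L_1 … L_m K_{m+1} … K_n α, consisting of a block of possibility operators followed by a block of knowledge operators for pairwise distinct agents, with α propositional, is successful in S5. -/
import Mathlib


/-- Formulas of public announcement logic over agent type `A` and atoms `P`. -/
inductive Form (A P : Type) : Type where
  | atom : P → Form A P
  | neg  : Form A P → Form A P
  | and  : Form A P → Form A P → Form A P
  | or   : Form A P → Form A P → Form A P
  | K    : A → Form A P → Form A P
  | ann  : Form A P → Form A P → Form A P

/-- The possibility operator `L_a φ := ¬ K_a ¬ φ`. -/
def Form.L {A P : Type} (a : A) (φ : Form A P) : Form A P := .neg (.K a (.neg φ))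

/-- An S5 epistemic model: worlds, an equivalence relation per agent, a valuation. -/
structure Model (A P : Type) where
  W : Type
  R : A → W → W → Prop
  equiv : ∀ a, Equivalence (R a)
  V : P → W → Prop

/-- Restriction (submodel) of a model to the worlds satisfying `S`. -/
def Model.restrict {A P : Type} (M : Model A P) (S : M.W → Prop) : Model A P where
  W := {w : M.W // S w}
  R a u v := M.R a u.1 v.1
  equiv a := ⟨fun _ => (M.equiv a).refl _, fun h => (M.equiv a).symm h,
              fun h h' => (M.equiv a).trans h h'⟩
  V p w := M.V p w.1

/-- Truth of a formula at a world of a model. -/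
def sat {A P : Type} : (M : Model A P) → M.W → Form A P → Prop
  | M, w, .atom p => M.V p w
  | M, w, .neg φ => ¬ sat M w φ
  | M, w, .and φ ψ => sat M w φ ∧ sat M w ψ
  | M, w, .or φ ψ => sat M w φ ∨ sat M w ψ
  | M, w, .K a φ => ∀ v, M.R a w v → sat M v φ
  | M, w, .ann φ ψ => ∀ h : sat M w φ, sat (M.restrict (fun v => sat M v φ)) ⟨w, h⟩ ψ

/-- A formula is successful iff it remains true after being announced. -/
def successful {A P : Type} (φ : Form A P) : Prop :=
  ∀ (M : Model A P) (w : M.W) (h : sat M w φ),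
    sat (M.restrict (fun v => sat M v φ)) ⟨w, h⟩ φ

/-- Purely propositional formulas (no epistemic or announcement operators). -/
def Form.isProp {A P : Type} : Form A P → Prop
  | .atom _ => True
  | .neg φ => φ.isProp
  | .and φ ψ => φ.isProp ∧ ψ.isProp
  | .or φ ψ => φ.isProp ∧ ψ.isProp
  | .K _ _ => False
  | .ann _ _ => False

/-- Prefix a formula with a sequence of `K` operators. -/
def Kseq {A P : Type} (l : List A) (φ : Form A P) : Form A P := l.foldr .K φ

/-- Prefix a formula with a sequence of `L` operators. -/
def Lseq {A P : Type} (l : List A) (φ : Form A P) : Form A P := l.foldr Form.L φ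

/-- Prefix a formula with a sequence of epistemic operators:
`(a, true)` stands for `K_a` and `(a, false)` for `L_a`. -/
def Eseq {A P : Type} (l : List (A × Bool)) (φ : Form A P) : Form A P :=
  l.foldr (fun e ψ => if e.2 then .K e.1 ψ else Form.L e.1 ψ) φ

/-- Propositional formulas have the same truth value in a restricted model. -/
lemma sat_restrict_prop {A P : Type} (M : Model A P) (S : M.W → Prop)
    (α : Form A P) (hα : α.isProp) :
    ∀ (u : (M.restrict S).W), sat (M.restrict S) u α ↔ sat M u.1 α := by
  induction α with
  | atom p => intro u; rfl
  | neg φ ih => intro u; exact not_congr (ih hα u)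
  | and φ ψ ihφ ihψ => intro u; exact and_congr (ihφ hα.1 u) (ihψ hα.2 u)
  | or φ ψ ihφ ihψ => intro u; exact or_congr (ihφ hα.1 u) (ihψ hα.2 u)
  | K a φ ih => exact absurd hα (by simp [Form.isProp])
  | ann φ ψ ihφ ihψ => exact absurd hα (by simp [Form.isProp])

/-- A `K`-block over a propositional formula is preserved under restriction. -/
lemma Kseq_restrict {A P : Type} (M : Model A P) (S : M.W → Prop)
    (α : Form A P) (hα : α.isProp) (l' : List A) :
    ∀ (u : (M.restrict S).W), sat M u.1 (Kseq l' α) → sat (M.restrict S) u (Kseq l' α) := by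
  induction l' with
  | nil => intro u h; exact (sat_restrict_prop M S α hα u).2 h
  | cons b l' ih =>
      intro u h v hv
      exact ih v (h v.1 hv)

/-- Reflexivity: a true formula is possible. -/
lemma sat_L_of_sat {A P : Type} (M : Model A P) (w : M.W) (a : A) (χ : Form A P)
    (h : sat M w χ) : sat M w (Form.L a χ) :=
  fun hk => hk w ((M.equiv a).refl w) h

/-- Main auxiliary lemma: if `u` satisfies a suffix `Lseq l₀ ψ` of the announced
formula `φ`, every world satisfying that suffix satisfies `φ`, and `ψ = Kseq l' α`
with `α` propositional, then the suffix holds at `u` in the restricted model. -/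
lemma Lseq_restrict_aux {A P : Type} (M : Model A P) (φ : Form A P)
    (α : Form A P) (hα : α.isProp) (l' : List A) (l₀ : List A) :
    ∀ (u : (M.restrict (fun v => sat M v φ)).W),
      sat M u.1 (Lseq l₀ (Kseq l' α)) →
      (∀ v, sat M v (Lseq l₀ (Kseq l' α)) → sat M v φ) →
      sat (M.restrict (fun v => sat M v φ)) u (Lseq l₀ (Kseq l' α)) := by
  induction l₀ with
  | nil => intro u h _; exact Kseq_restrict M _ α hα l' u h
  | cons a l₀ ih =>
      intro u h H
      -- `h : sat M u.1 (Form.L a (Lseq l₀ (Kseq l' α)))`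
      have h' : ¬ ∀ v, M.R a u.1 v → ¬ sat M v (Lseq l₀ (Kseq l' α)) := h
      push_neg at h'
      obtain ⟨v, hR, hv⟩ := h'
      have hvφ : sat M v φ := H v (sat_L_of_sat M v a _ hv)
      intro hk
      exact hk ⟨v, hvφ⟩ hR
        (ih ⟨v, hvφ⟩ hv (fun w hw => H w (sat_L_of_sat M w a _ hw)))

/-- Every LK-simple single term formula `L_1 … L_m K_{m+1} … K_n α` (a nonempty block
of possibility operators followed by a block of knowledge operators, pairwise distinct
agents, `α` propositional) is successful in S5. -/
theorem LK_simple_single_term_successful {A P : Type} (l l' : List A)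
    (hl : l ≠ []) (hnd : (l ++ l').Nodup) (α : Form A P) (hα : α.isProp) :
    successful (Lseq l (Kseq l' α)) := by
  intro M w h
  exact Lseq_restrict_aux M _ α hα l' l ⟨w, h⟩ h (fun _ hv => hv)
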